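/- arXiv:0709.2830 — 4 statements merged into one kernel-verified Lean document; each statement's English description precedes it below -/
import Mathlib

section
/- If there exists a nonnegative 𝓕-measurable random variable X such that E[ρX] < ∞ and V₊(X) = +∞, then Problem (P) is ill-posed, i.e. the supremum of V(X) over all a.s. lower-bounded 𝓕-measurable random variables X with E[ρX] = x₀ equals +∞. -/
open MeasureTheory Set Filter
open scoped ENNReal symmDiff

noncomputable section

/-- The data of the continuous-time behavioral portfolio selection model:
a probability space, the pricing kernel `ρ`, the utilities `up = u₊`, `um = u₋`
(with the derivatives `up'`, `up''` of `u₊`), the probability distortions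
`Tp = T₊`, `Tm = T₋`, and the initial endowment `x0`. -/
structure BSetup (Ω : Type*) [MeasurableSpace Ω] where
  P : MeasureTheory.Measure Ω
  isProb : MeasureTheory.IsProbabilityMeasure P
  ρ : Ω → ℝ
  meas_ρ : Measurable ρ
  ρ_pos : ∀ᵐ ω ∂P, 0 < ρ ω
  ρ_int : MeasureTheory.Integrable ρ P
  Eρ_pos : 0 < ∫ ω, ρ ω ∂P
  ρ_atomless : ∀ a : ℝ, P {ω | ρ ω = a} = 0
  up : ℝ → ℝ
  um : ℝ → ℝ
  up' : ℝ → ℝ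
  up'' : ℝ → ℝ
  up_mono : StrictMonoOn up (Set.Ici 0)
  um_mono : StrictMonoOn um (Set.Ici 0)
  up_concave : ConcaveOn ℝ (Set.Ici 0) up
  um_concave : ConcaveOn ℝ (Set.Ici 0) um
  up_zero : up 0 = 0
  um_zero : um 0 = 0
  up_sconcave : StrictConcaveOn ℝ (Set.Ici 0) up
  up_deriv : ∀ x ∈ Set.Ioi (0:ℝ), HasDerivAt up (up' x) x
  up_deriv2 : ∀ x ∈ Set.Ioi (0:ℝ), HasDerivAt up' (up'' x) x
  up'_zero : Filter.Tendsto up' (nhdsWithin 0 (Set.Ioi 0)) Filter.atTop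
  up'_atTop : Filter.Tendsto up' Filter.atTop (nhds 0)
  Tp : ℝ → ℝ
  Tm : ℝ → ℝ
  Tp_mono : StrictMonoOn Tp (Set.Icc 0 1)
  Tm_mono : StrictMonoOn Tm (Set.Icc 0 1)
  Tp_diff : DifferentiableOn ℝ Tp (Set.Icc 0 1)
  Tm_diff : DifferentiableOn ℝ Tm (Set.Icc 0 1)
  Tp_zero : Tp 0 = 0
  Tm_zero : Tm 0 = 0
  Tp_one : Tp 1 = 1
  Tm_one : Tm 1 = 1
  x0 : ℝ

variable {Ω : Type*} [MeasurableSpace Ω]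

/-- `V₊(Y) = ∫₀^∞ T₊(P{u₊(Y) > y}) dy`, as a value in `[0,∞]`. -/
def Vpl (S : BSetup Ω) (Y : Ω → ℝ) : ℝ≥0∞ :=
  ∫⁻ y in Set.Ioi (0:ℝ), ENNReal.ofReal (S.Tp ((S.P {ω | y < S.up (Y ω)}).toReal))

/-- `V₋(Y) = ∫₀^∞ T₋(P{u₋(Y) > y}) dy`, as a value in `[0,∞]`. -/
def Vmn (S : BSetup Ω) (Y : Ω → ℝ) : ℝ≥0∞ :=
  ∫⁻ y in Set.Ioi (0:ℝ), ENNReal.ofReal (S.Tm ((S.P {ω | y < S.um (Y ω)}).toReal))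

/-- `V(X) = V₊(X⁺) − V₋(X⁻)`, an extended real number. -/
def Vval (S : BSetup Ω) (X : Ω → ℝ) : EReal :=
  (Vpl S (fun ω => max (X ω) 0)).toEReal - (Vmn S (fun ω => max (-X ω) 0)).toEReal

/-- Feasibility for Problem (P): `X` is a random variable, a.s. bounded below,
with `E[ρX] = x₀`. -/
def FeasP (S : BSetup Ω) (X : Ω → ℝ) : Prop :=
  AEMeasurable X S.P ∧ (∃ b : ℝ, ∀ᵐ ω ∂S.P, b ≤ X ω) ∧
    MeasureTheory.Integrable (fun ω => S.ρ ω * X ω) S.P ∧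
    (∫ ω, S.ρ ω * X ω ∂S.P) = S.x0

/-- The supremum value of Problem (P). -/
def supP (S : BSetup Ω) : EReal :=
  sSup {v : EReal | ∃ X : Ω → ℝ, FeasP S X ∧ v = Vval S X}

/-- Problem (P) is ill-posed if its supremum value is `+∞`. -/
def IllposedP (S : BSetup Ω) : Prop := supP S = ⊤

/-- `X` is an optimal solution of Problem (P). -/
def OptimalP (S : BSetup Ω) (X : Ω → ℝ) : Prop :=
  FeasP S X ∧ ∀ Y : Ω → ℝ, FeasP S Y → Vval S Y ≤ Vval S X

/-- Feasibility for the positive part problem with parameters `(A, x₊)`. -/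
def FeasPos (S : BSetup Ω) (A : Set Ω) (xp : ℝ) (X : Ω → ℝ) : Prop :=
  AEMeasurable X S.P ∧ (∀ᵐ ω ∂S.P, 0 ≤ X ω) ∧
    MeasureTheory.Integrable (fun ω => S.ρ ω * X ω) S.P ∧
    (∫ ω, S.ρ ω * X ω ∂S.P) = xp ∧
    (∀ᵐ ω ∂S.P, ω ∉ A → X ω = 0)

/-- Optimality for the positive part problem with parameters `(A, x₊)`. -/
def OptPos (S : BSetup Ω) (A : Set Ω) (xp : ℝ) (X : Ω → ℝ) : Prop :=
  FeasPos S A xp X ∧ ∀ Y : Ω → ℝ, FeasPos S A xp Y → Vpl S Y ≤ Vpl S X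

/-- The value `v₊(A, x₊)` of the positive part problem. -/
def vPos (S : BSetup Ω) (A : Set Ω) (xp : ℝ) : EReal :=
  if S.P A = 0 then (if xp = 0 then 0 else ⊥)
  else sSup {v : EReal | ∃ X : Ω → ℝ, FeasPos S A xp X ∧ v = (Vpl S X).toEReal}

/-- Feasibility for the negative part problem with parameters `(A, x₊)`. -/
def FeasNeg (S : BSetup Ω) (A : Set Ω) (xp : ℝ) (X : Ω → ℝ) : Prop :=
  AEMeasurable X S.P ∧ (∀ᵐ ω ∂S.P, 0 ≤ X ω) ∧ (∃ b : ℝ, ∀ᵐ ω ∂S.P, X ω ≤ b) ∧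
    MeasureTheory.Integrable (fun ω => S.ρ ω * X ω) S.P ∧
    (∫ ω, S.ρ ω * X ω ∂S.P) = xp - S.x0 ∧
    (∀ᵐ ω ∂S.P, ω ∈ A → X ω = 0)

/-- Optimality for the negative part problem with parameters `(A, x₊)`. -/
def OptNeg (S : BSetup Ω) (A : Set Ω) (xp : ℝ) (X : Ω → ℝ) : Prop :=
  FeasNeg S A xp X ∧ ∀ Y : Ω → ℝ, FeasNeg S A xp Y → Vmn S X ≤ Vmn S Y

/-- The value `v₋(A, x₊)` of the negative part problem. -/
def vNeg (S : BSetup Ω) (A : Set Ω) (xp : ℝ) : EReal :=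
  if S.P A = 1 then (if xp = S.x0 then 0 else ⊤)
  else sInf {v : EReal | ∃ X : Ω → ℝ, FeasNeg S A xp X ∧ v = (Vmn S X).toEReal}

/-- Feasibility for Problem (S). -/
def FeasS (S : BSetup Ω) (A : Set Ω) (xp : ℝ) : Prop :=
  MeasurableSet A ∧ max S.x0 0 ≤ xp ∧ (S.P A = 0 → xp = 0) ∧ (S.P A = 1 → xp = S.x0)

/-- The objective of Problem (S): `v₊(A, x₊) − v₋(A, x₊)`. -/
def objS (S : BSetup Ω) (A : Set Ω) (xp : ℝ) : EReal := vPos S A xp - vNeg S A xp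

/-- The supremum value of Problem (S). -/
def supS (S : BSetup Ω) : EReal :=
  sSup {v : EReal | ∃ (A : Set Ω) (xp : ℝ), FeasS S A xp ∧ v = objS S A xp}

/-- Optimality for Problem (S). -/
def OptS (S : BSetup Ω) (A : Set Ω) (xp : ℝ) : Prop :=
  FeasS S A xp ∧ ∀ (B : Set Ω) (yp : ℝ), FeasS S B yp → objS S B yp ≤ objS S A xp

/-- `ρ̄ = esssup ρ` (an extended real number). -/
def rhoBar (S : BSetup Ω) : EReal := essSup (fun ω => (S.ρ ω : EReal)) S.P

/-- `ρ̲ = essinf ρ` (an extended real number). -/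
def rhoLow (S : BSetup Ω) : EReal := essInf (fun ω => (S.ρ ω : EReal)) S.P

/-- The event `{ρ ≤ c}`. -/
def lev (S : BSetup Ω) (c : EReal) : Set Ω := {ω | (S.ρ ω : EReal) ≤ c}

/-- Feasibility of `(c, x₊)` for Problems (S_c) and (M). -/
def FeasSc (S : BSetup Ω) (c : EReal) (xp : ℝ) : Prop :=
  rhoLow S ≤ c ∧ c ≤ rhoBar S ∧ max S.x0 0 ≤ xp ∧
    (c = rhoLow S → xp = 0) ∧ (c = rhoBar S → xp = S.x0)

/-- The objective of Problem (S_c): `v₊(c, x₊) − v₋(c, x₊)`. -/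
def objSc (S : BSetup Ω) (c : EReal) (xp : ℝ) : EReal :=
  vPos S (lev S c) xp - vNeg S (lev S c) xp

/-- Optimality for Problem (S_c). -/
def OptSc (S : BSetup Ω) (c : EReal) (xp : ℝ) : Prop :=
  FeasSc S c xp ∧ ∀ (c' : EReal) (xp' : ℝ), FeasSc S c' xp' → objSc S c' xp' ≤ objSc S c xp

/-- The supremum value of Problem (S_c). -/
def supSc (S : BSetup Ω) : EReal :=
  sSup {v : EReal | ∃ (c : EReal) (xp : ℝ), FeasSc S c xp ∧ v = objSc S c xp}

/-- The distribution function `F` of `ρ`. -/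
def Fdist (S : BSetup Ω) (x : ℝ) : ℝ := (S.P {ω | S.ρ ω ≤ x}).toReal

/-- The distribution function of `ρ` evaluated at an extended real `c`. -/
def FdistE (S : BSetup Ω) (c : EReal) : ℝ := (S.P {ω | (S.ρ ω : EReal) ≤ c}).toReal

/-- `E[ρ·1_{ρ>c}]`. -/
def ERhoGt (S : BSetup Ω) (c : EReal) : ℝ :=
  ∫ ω, (if c < (S.ρ ω : EReal) then S.ρ ω else 0) ∂S.P

/-- The objective of Problem (M):
`v₊(c, x₊) − u₋((x₊−x₀)/E[ρ1_{ρ>c}])·T₋(1−F(c))`.  (When `c = ρ̄` and `x₊ = x₀`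
the subtracted term vanishes, realizing the convention of the paper.) -/
def objM (S : BSetup Ω) (c : EReal) (xp : ℝ) : EReal :=
  vPos S (lev S c) xp -
    ((S.um ((xp - S.x0) / ERhoGt S c) * S.Tm (1 - FdistE S c) : ℝ) : EReal)

/-- Optimality for Problem (M). -/
def OptM (S : BSetup Ω) (c : EReal) (xp : ℝ) : Prop :=
  FeasSc S c xp ∧ ∀ (c' : EReal) (xp' : ℝ), FeasSc S c' xp' → objM S c' xp' ≤ objM S c xp

/-- The supremum value of Problem (M). -/
def supM (S : BSetup Ω) : EReal :=
  sSup {v : EReal | ∃ (c : EReal) (xp : ℝ), FeasSc S c xp ∧ v = objM S c xp}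

/-- The generalized inverse `F⁻¹(z) = inf{y ≥ 0 : F(y) ≥ z}` of the distribution
function of `ρ`, valued in the extended reals (`= +∞` if no such `y` exists). -/
def FinvE (S : BSetup Ω) (z : ℝ) : EReal :=
  sInf {c : EReal | ∃ y : ℝ, 0 ≤ y ∧ z ≤ Fdist S y ∧ c = (y : EReal)}

/-- The finiteness condition: `V₊(X) < ∞` whenever `X ≥ 0` a.s. and `E[ρX] < ∞`. -/
def FinCond (S : BSetup Ω) : Prop :=
  ∀ X : Ω → ℝ, AEMeasurable X S.P → (∀ᵐ ω ∂S.P, 0 ≤ X ω) →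
    MeasureTheory.Integrable (fun ω => S.ρ ω * X ω) S.P → Vpl S X < ⊤

/-- `u` is strictly concave at `0`: `u(λx) > λu(x)` for `x > 0`, `λ ∈ (0,1)`. -/
def StrictConcaveAtZero (u : ℝ → ℝ) : Prop :=
  ∀ x : ℝ, 0 < x → ∀ l : ℝ, 0 < l → l < 1 → l * u x < u (l * x)

/-! Shift `X` by the constant `b = (E[ρX] - x₀) / E[ρ]` to make it feasible. The negative part of
`X - b` is bounded by `max b 0`, so it costs at most `u₋(max b 0)`. The positive part keeps
infinite value: by subadditivity of the concave `u₊`, `{u₊(X) > y + u₊(b)} ⊆ {u₊(X - b) > y}`,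
so shifting the level variable of `V₊` by `u₊(b)` loses at most `u₊(b)`, since `T₊ ≤ 1`. -/

lemma ConcaveOn.map_add_le {f : ℝ → ℝ} (hf : ConcaveOn ℝ (Ici 0) f) (h0 : 0 ≤ f 0)
    {a b : ℝ} (ha : 0 ≤ a) (hb : 0 ≤ b) : f (a + b) ≤ f a + f b := by
  rcases (add_nonneg ha hb).eq_or_lt with hab | hab
  · obtain ⟨rfl, rfl⟩ : a = 0 ∧ b = 0 := ⟨by linarith, by linarith⟩
    simpa using h0
  -- `x = (x / (a + b)) • (a + b) + (y / (a + b)) • 0`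
  have key : ∀ x y : ℝ, 0 ≤ x → 0 ≤ y → x + y = a + b → x / (a + b) * f (a + b) ≤ f x := by
    intro x y hx hy hxy
    have := hf.2 (mem_Ici.2 hab.le) (mem_Ici.2 le_rfl) (div_nonneg hx hab.le)
      (div_nonneg hy hab.le) (by rw [← add_div, hxy, div_self hab.ne'])
    simp only [smul_eq_mul, mul_zero, add_zero, div_mul_cancel₀ x hab.ne'] at this
    linarith [mul_nonneg (div_nonneg hy hab.le) h0]
  have hsum : a / (a + b) * f (a + b) + b / (a + b) * f (a + b) = f (a + b) := by
    rw [← add_mul, ← add_div, div_self hab.ne', one_mul]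
  linarith [key a b ha hb rfl, key b a hb ha (add_comm b a)]

section Distortion

variable {T : ℝ → ℝ}

lemma ofReal_distortion_mono (hT : MonotoneOn T (Icc 0 1)) {p q : ℝ≥0∞} (hpq : p ≤ q)
    (hq : q ≤ 1) : ENNReal.ofReal (T p.toReal) ≤ ENNReal.ofReal (T q.toReal) := by
  have hq' : q.toReal ≤ 1 := ENNReal.toReal_le_of_le_ofReal zero_le_one (by simpa using hq)
  have hpq' : p.toReal ≤ q.toReal :=
    ENNReal.toReal_mono (ne_top_of_le_ne_top ENNReal.one_ne_top hq) hpq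
  exact ENNReal.ofReal_le_ofReal
    (hT ⟨ENNReal.toReal_nonneg, hpq'.trans hq'⟩ ⟨ENNReal.toReal_nonneg, hq'⟩ hpq')

lemma ofReal_distortion_le_one (hT : MonotoneOn T (Icc 0 1)) (hT1 : T 1 = 1) {p : ℝ≥0∞}
    (hp : p ≤ 1) : ENNReal.ofReal (T p.toReal) ≤ 1 := by
  simpa [hT1] using ofReal_distortion_mono hT hp le_rfl

end Distortion

lemma setLIntegral_Ioi_zero_le_add_shift {g : ℝ → ℝ≥0∞} (hg : ∀ y, g y ≤ 1) (c : ℝ) :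
    ∫⁻ y in Ioi 0, g y ≤ ENNReal.ofReal c + ∫⁻ y in Ioi 0, g (y + c) := by
  have hshift : ∫⁻ y in Ioi 0, g (y + c) = ∫⁻ y in Ioi c, g y := by
    have := (measurePreserving_add_right volume c).setLIntegral_comp_preimage_emb
      (measurableEmbedding_addRight c) g (Ioi c)
    rwa [preimage_add_const_Ioi, sub_self] at this
  calc ∫⁻ y in Ioi 0, g y ≤ ∫⁻ y in Ioc 0 c ∪ Ioi c, g y :=
        lintegral_mono_set fun y hy => (le_or_gt y c).imp (fun h => ⟨hy, h⟩) id
    _ ≤ (∫⁻ y in Ioc 0 c, g y) + ∫⁻ y in Ioi c, g y := lintegral_union_le _ _ _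
    _ ≤ (∫⁻ _ in Ioc 0 c, 1) + ∫⁻ y in Ioi c, g y := by gcongr with y; exact hg y
    _ = ENNReal.ofReal c + ∫⁻ y in Ioi 0, g (y + c) := by simp [hshift]

lemma Vpl_mono (S : BSetup Ω) {Y Z : Ω → ℝ} (hY : ∀ᵐ ω ∂S.P, 0 ≤ Y ω)
    (hYZ : ∀ᵐ ω ∂S.P, Y ω ≤ Z ω) : Vpl S Y ≤ Vpl S Z := by
  have := S.isProb
  refine lintegral_mono fun y => ofReal_distortion_mono S.Tp_mono.monotoneOn
    (measure_mono_ae ?_) prob_le_one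
  filter_upwards [hY, hYZ] with ω hYω hYZω (hy : y < S.up (Y ω))
  exact hy.trans_le (S.up_mono.monotoneOn hYω (hYω.trans hYZω) hYZω)

lemma Vpl_le_up_add_Vpl_sub (S : BSetup Ω) {X : Ω → ℝ} (hX : ∀ᵐ ω ∂S.P, 0 ≤ X ω) {b : ℝ}
    (hb : 0 ≤ b) : Vpl S X ≤ ENNReal.ofReal (S.up b) + Vpl S (fun ω => max (X ω - b) 0) := by
  have := S.isProb
  refine (setLIntegral_Ioi_zero_le_add_shift (fun y => ofReal_distortion_le_one
    S.Tp_mono.monotoneOn S.Tp_one prob_le_one) (S.up b)).trans (add_le_add le_rfl ?_)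
  refine setLIntegral_mono' measurableSet_Ioi fun y (hy : 0 < y) => ofReal_distortion_mono
    S.Tp_mono.monotoneOn (measure_mono_ae ?_) prob_le_one
  filter_upwards [hX] with ω hXω (hXy : y + S.up b < S.up (X ω))
  show y < S.up (max (X ω - b) 0)
  have hbX : b ≤ X ω := by
    by_contra! hXb
    linarith [S.up_mono.monotoneOn hXω hb hXb.le]
  have hsub : S.up (X ω) ≤ S.up (X ω - b) + S.up b := by
    simpa using S.up_concave.map_add_le S.up_zero.ge (sub_nonneg.2 hbX) hb
  rw [max_eq_left (sub_nonneg.2 hbX)]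
  linarith

lemma Vpl_max_sub_eq_top (S : BSetup Ω) {X : Ω → ℝ} (hX : ∀ᵐ ω ∂S.P, 0 ≤ X ω)
    (htop : Vpl S X = ⊤) (b : ℝ) : Vpl S (fun ω => max (X ω - b) 0) = ⊤ := by
  have hshift := Vpl_le_up_add_Vpl_sub S hX (le_max_right b 0)
  rw [htop, top_le_iff, ENNReal.add_eq_top] at hshift
  refine top_le_iff.1 (hshift.resolve_left ENNReal.ofReal_ne_top ▸ Vpl_mono S ?_ ?_)
  · exact ae_of_all _ fun ω => le_max_right _ _
  · exact ae_of_all _ fun ω => max_le_max_right 0 (by linarith [le_max_left b 0])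

lemma Vmn_le_of_ae_um_le (S : BSetup Ω) {Y : Ω → ℝ} {c : ℝ}
    (hY : ∀ᵐ ω ∂S.P, S.um (Y ω) ≤ c) : Vmn S Y ≤ ENNReal.ofReal c := by
  have := S.isProb
  refine (setLIntegral_Ioi_zero_le_add_shift (fun y => ofReal_distortion_le_one
    S.Tm_mono.monotoneOn S.Tm_one prob_le_one) c).trans ?_
  have htail : ∀ y ∈ Ioi (0 : ℝ), S.P {ω | y + c < S.um (Y ω)} = 0 := fun y (hy : 0 < y) =>
    measure_eq_zero_iff_ae_notMem.2 <| hY.mono fun ω hω (h : y + c < _) => by linarith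
  rw [setLIntegral_congr_fun measurableSet_Ioi fun y hy => by rw [htail y hy]]
  simp [S.Tm_zero]

lemma Vmn_max_neg_sub_ne_top (S : BSetup Ω) {X : Ω → ℝ} (hX : ∀ᵐ ω ∂S.P, 0 ≤ X ω) (b : ℝ) :
    Vmn S (fun ω => max (-(X ω - b)) 0) ≠ ⊤ := by
  refine ne_top_of_le_ne_top ENNReal.ofReal_ne_top (Vmn_le_of_ae_um_le S (c := S.um (max b 0)) ?_)
  filter_upwards [hX] with ω hXω
  exact S.um_mono.monotoneOn (mem_Ici.2 (le_max_right _ _)) (mem_Ici.2 (le_max_right b 0))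
    (max_le_max_right 0 (by linarith))

lemma feasP_sub_const (S : BSetup Ω) {X : Ω → ℝ} (hXm : AEMeasurable X S.P)
    (hXb : ∃ a : ℝ, ∀ᵐ ω ∂S.P, a ≤ X ω) (hXint : Integrable (fun ω => S.ρ ω * X ω) S.P) :
    FeasP S (fun ω => X ω - ((∫ ω, S.ρ ω * X ω ∂S.P) - S.x0) / ∫ ω, S.ρ ω ∂S.P) := by
  set b := ((∫ ω, S.ρ ω * X ω ∂S.P) - S.x0) / ∫ ω, S.ρ ω ∂S.P
  obtain ⟨a, ha⟩ := hXb
  have hρX' : (fun ω => S.ρ ω * (X ω - b)) = fun ω => S.ρ ω * X ω - S.ρ ω * b := by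
    ext ω; ring
  refine ⟨hXm.sub_const b, ⟨a - b, ha.mono fun ω hω => by linarith⟩, ?_, ?_⟩
  · rw [hρX']; exact hXint.sub (S.ρ_int.mul_const b)
  · rw [hρX', integral_sub hXint (S.ρ_int.mul_const b), integral_mul_const,
      mul_div_cancel₀ _ S.Eρ_pos.ne']
    ring

lemma Vval_eq_top (S : BSetup Ω) {X : Ω → ℝ} (hpos : Vpl S (fun ω => max (X ω) 0) = ⊤)
    (hneg : Vmn S (fun ω => max (-X ω) 0) ≠ ⊤) : Vval S X = ⊤ := by
  rw [Vval, hpos, EReal.coe_ennreal_top, ← EReal.coe_ennreal_toReal hneg]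
  exact EReal.top_sub_coe _

lemma illposedP_of_feasP_of_Vval_eq_top (S : BSetup Ω) {X : Ω → ℝ} (hX : FeasP S X)
    (htop : Vval S X = ⊤) : IllposedP S :=
  top_le_iff.1 (le_sSup ⟨X, hX, htop.symm⟩)

/-- Theorem 3.1 / ill-posedness from the gain part:
If there exists a nonnegative random variable `X` with `E[ρX] < ∞` and
`V₊(X) = +∞`, then Problem (P) is ill-posed. -/
theorem illposed_of_infinite_gain_value (S : BSetup Ω)
    (h : ∃ X : Ω → ℝ, AEMeasurable X S.P ∧ (∀ᵐ ω ∂S.P, 0 ≤ X ω) ∧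
      MeasureTheory.Integrable (fun ω => S.ρ ω * X ω) S.P ∧ Vpl S X = ⊤) :
    IllposedP S := by
  obtain ⟨X, hXm, hX0, hXint, hXtop⟩ := h
  set b := ((∫ ω, S.ρ ω * X ω ∂S.P) - S.x0) / ∫ ω, S.ρ ω ∂S.P
  exact illposedP_of_feasP_of_Vval_eq_top S (feasP_sub_const S hXm ⟨0, hX0⟩ hXint)
    (Vval_eq_top S (Vpl_max_sub_eq_top S hX0 hXtop b) (Vmn_max_neg_sub_ne_top S hX0 b))

end
end

section
/- If sup_{x ≥ 0} u₊(x) = +∞, esssup ρ = +∞, and T₋(x) = x for all x ∈ [0,1], then Problem (P) is ill-posed, i.e. the supremum of V(X) over all a.s. lower-bounded 𝓕-measurable random variables X with E[ρX] = x₀ equals +∞. -/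
open MeasureTheory Set Filter
open scoped ENNReal symmDiff

noncomputable section

variable {Ω : Type*} [MeasurableSpace Ω]

/-! The claim `a · 1_{ρ ≤ k}` (bought on an event of positive probability) is financed by a short
position `b · 1_{ρ > c}`. Because `esssup ρ = ∞`, `c` can be taken so large that `b P(ρ > c) ≤ 1`;
with `T₋` the identity the loss `P(ρ > c) u₋(b)` is then at most `u₋(1)` by concavity of `u₋`,
while the gain `T₊(P(ρ ≤ k)) u₊(a)` is unbounded in `a`. -/

theorem MonotoneOn.map_nonneg {f : ℝ → ℝ} {s : Set ℝ} (hf : MonotoneOn f s) (h0 : 0 ∈ s)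
    (hf0 : f 0 = 0) {x : ℝ} (hx : x ∈ s) (hx0 : 0 ≤ x) : 0 ≤ f x :=
  hf0 ▸ hf h0 hx hx0

theorem toReal_measure_mem_Icc {μ : Measure Ω} [IsProbabilityMeasure μ] (s : Set Ω) :
    (μ s).toReal ∈ Icc (0 : ℝ) 1 :=
  ⟨ENNReal.toReal_nonneg, ENNReal.toReal_le_of_le_ofReal zero_le_one (by simp [prob_le_one])⟩

theorem ConcaveOn.mul_apply_le_apply_one {u : ℝ → ℝ} (hu : ConcaveOn ℝ (Ici 0) u)
    (hmono : MonotoneOn u (Ici 0)) (hu0 : u 0 = 0) {p b : ℝ} (hp0 : 0 ≤ p) (hp1 : p ≤ 1)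
    (hb : 0 ≤ b) (hbp : b * p ≤ 1) : p * u b ≤ u 1 := by
  have hu1 : 0 ≤ u 1 := hmono.map_nonneg self_mem_Ici hu0 (by simp) zero_le_one
  rcases le_or_gt b 1 with hb1 | hb1
  · have hub : 0 ≤ u b := hmono.map_nonneg self_mem_Ici hu0 hb hb
    nlinarith [hmono hb (by simp : (1 : ℝ) ∈ Ici 0) hb1]
  · have hb0 : 0 < b := one_pos.trans hb1
    -- `1` is the convex combination `b⁻¹ • b + (1 - b⁻¹) • 0`
    have hchord := hu.2 (mem_Ici.2 hb) self_mem_Ici (inv_nonneg.2 hb0.le)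
      (sub_nonneg.2 (inv_le_one_of_one_le₀ hb1.le)) (add_sub_cancel _ _)
    simp only [smul_eq_mul, mul_zero, add_zero, hu0, inv_mul_cancel₀ hb0.ne'] at hchord
    have hub : u b ≤ b * u 1 := by
      rwa [inv_mul_le_iff₀ hb0] at hchord
    nlinarith

theorem lintegral_distortion_indicator_const (μ : Measure Ω) {T u : ℝ → ℝ} (hT : T 0 = 0)
    (hu : u 0 = 0) (E : Set Ω) (a : ℝ) :
    ∫⁻ y in Ioi (0 : ℝ), ENNReal.ofReal (T (μ {ω | y < u (E.indicator (fun _ => a) ω)}).toReal) =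
      ENNReal.ofReal (T (μ E).toReal) * ENNReal.ofReal (u a) := by
  have hlevel : EqOn
      (fun y => ENNReal.ofReal (T (μ {ω | y < u (E.indicator (fun _ => a) ω)}).toReal))
      ((Iio (u a)).indicator fun _ => ENNReal.ofReal (T (μ E).toReal)) (Ioi 0) := by
    intro y (hy : 0 < y)
    by_cases hya : y < u a
    · have hE : {ω | y < u (E.indicator (fun _ => a) ω)} = E := by
        ext ω
        by_cases hω : ω ∈ E <;> simp [hω, hya, hu, hy.le]
      simp [hE, hya]
    · have hempty : {ω | y < u (E.indicator (fun _ => a) ω)} = ∅ := by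
        ext ω
        by_cases hω : ω ∈ E <;> simp [hω, hya, hu, hy.le]
      simp [hempty, hya, hT]
  rw [setLIntegral_congr_fun measurableSet_Ioi hlevel, lintegral_indicator_const measurableSet_Iio,
    Measure.restrict_apply measurableSet_Iio, inter_comm, Ioi_inter_Iio, Real.volume_Ioo, sub_zero]

theorem measure_lt_ne_zero_of_essSup_eq_top {μ : Measure Ω} {f : Ω → ℝ}
    (h : essSup (fun ω => (f ω : EReal)) μ = ⊤) (c : ℝ) : μ {ω | c < f ω} ≠ 0 := by
  intro hnull
  have hle : essSup (fun ω => (f ω : EReal)) μ ≤ c :=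
    essSup_le_of_ae_le _ (ae_iff.2 (by simpa only [EReal.coe_le_coe_iff, not_le] using hnull))
  exact (EReal.coe_lt_top c).not_ge (h ▸ hle)

theorem exists_pos_setIntegral_setOf_le {μ : Measure Ω} {f : Ω → ℝ} (hf : Measurable f)
    (hfi : Integrable f μ) (hpos : 0 < ∫ ω, f ω ∂μ) :
    ∃ k : ℝ, 0 < ∫ ω in {ω | f ω ≤ k}, f ω ∂μ := by
  have hunion : (⋃ n : ℕ, {ω | f ω ≤ n}) = univ :=
    iUnion_eq_univ_iff.2 fun ω => ⟨⌈f ω⌉₊, Nat.le_ceil (f ω)⟩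
  have hlim := tendsto_setIntegral_of_monotone (μ := μ) (f := f)
    (fun n : ℕ => measurableSet_le hf measurable_const)
    (fun m n hmn ω (hω : f ω ≤ m) => hω.trans (Nat.cast_le.2 hmn)) (hunion ▸ hfi.integrableOn)
  rw [hunion, setIntegral_univ] at hlim
  obtain ⟨n, hn⟩ := (hlim.eventually (lt_mem_nhds hpos)).exists
  exact ⟨n, hn⟩

namespace BSetup

variable (S : BSetup Ω)

theorem feasP_indicator_sub_indicator {A B : Set Ω} (hA : MeasurableSet A)
    (hB : MeasurableSet B) {a b : ℝ} (ha : 0 ≤ a) (hb : 0 ≤ b)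
    (hbudget : a * ∫ ω in B, S.ρ ω ∂S.P - b * ∫ ω in A, S.ρ ω ∂S.P = S.x0) :
    FeasP S fun ω => B.indicator (fun _ => a) ω - A.indicator (fun _ => b) ω := by
  have hρX : (fun ω => S.ρ ω * (B.indicator (fun _ => a) ω - A.indicator (fun _ => b) ω)) =
      fun ω => B.indicator (fun ω => S.ρ ω * a) ω - A.indicator (fun ω => S.ρ ω * b) ω := by
    funext ω
    simp only [mul_sub, ← indicator_mul_right]
  have hintB := (S.ρ_int.mul_const a).indicator hB
  have hintA := (S.ρ_int.mul_const b).indicator hA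
  refine ⟨((measurable_const.indicator hB).sub (measurable_const.indicator hA)).aemeasurable,
    ⟨-b, ae_of_all _ fun ω => ?_⟩, hρX ▸ hintB.sub hintA, ?_⟩
  · have hBa := B.indicator_nonneg (fun _ _ => ha) ω
    have hAb := A.indicator_le_self' (fun _ _ => hb) ω
    linarith
  · rw [hρX, integral_sub hintB hintA, integral_indicator hB, integral_indicator hA,
      integral_mul_const, integral_mul_const, ← hbudget]
    ring

theorem Vval_indicator_sub_indicator {A B : Set Ω} (hBA : Disjoint B A) {a b : ℝ}
    (ha : 0 ≤ a) (hb : 0 ≤ b) :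
    Vval S (fun ω => B.indicator (fun _ => a) ω - A.indicator (fun _ => b) ω) =
      ((S.Tp (S.P B).toReal * S.up a - S.Tm (S.P A).toReal * S.um b : ℝ) : EReal) := by
  have := S.isProb
  have hpos : (fun ω => max (B.indicator (fun _ => a) ω - A.indicator (fun _ => b) ω) 0) =
      B.indicator fun _ => a := by
    funext ω
    by_cases hωB : ω ∈ B
    · simp [hωB, disjoint_left.1 hBA hωB, ha]
    · by_cases hωA : ω ∈ A <;> simp [hωB, hωA, hb]
  have hneg : (fun ω => max (-(B.indicator (fun _ => a) ω - A.indicator (fun _ => b) ω)) 0) =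
      A.indicator fun _ => b := by
    funext ω
    by_cases hωB : ω ∈ B
    · simp [hωB, disjoint_left.1 hBA hωB, ha]
    · by_cases hωA : ω ∈ A <;> simp [hωB, hωA, hb]
  have hTp := S.Tp_mono.monotoneOn.map_nonneg (by simp) S.Tp_zero
    (toReal_measure_mem_Icc (μ := S.P) B) ENNReal.toReal_nonneg
  have hTm := S.Tm_mono.monotoneOn.map_nonneg (by simp) S.Tm_zero
    (toReal_measure_mem_Icc (μ := S.P) A) ENNReal.toReal_nonneg
  have hup := S.up_mono.monotoneOn.map_nonneg self_mem_Ici S.up_zero (mem_Ici.2 ha) ha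
  have hum := S.um_mono.monotoneOn.map_nonneg self_mem_Ici S.um_zero (mem_Ici.2 hb) hb
  rw [Vval, hpos, hneg, Vpl, Vmn,
    lintegral_distortion_indicator_const _ S.Tp_zero S.up_zero,
    lintegral_distortion_indicator_const _ S.Tm_zero S.um_zero,
    ← ENNReal.ofReal_mul hTp, ← ENNReal.ofReal_mul hTm, EReal.coe_ennreal_ofReal,
    EReal.coe_ennreal_ofReal, max_eq_left (mul_nonneg hTp hup),
    max_eq_left (mul_nonneg hTm hum), EReal.coe_sub]

theorem exists_short_position (hbar : rhoBar S = ⊤) (k : ℝ) {z : ℝ} (hz : 0 ≤ z) :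
    ∃ A : Set Ω, MeasurableSet A ∧ Disjoint {ω | S.ρ ω ≤ k} A ∧ ∃ b : ℝ, 0 ≤ b ∧
      b * ∫ ω in A, S.ρ ω ∂S.P = z ∧ (S.P A).toReal * S.um b ≤ S.um 1 := by
  have := S.isProb
  set c := max k (max 1 z)
  have hc1 : 1 ≤ c := le_max_of_le_right (le_max_left _ _)
  set A := {ω | c < S.ρ ω}
  have hA : MeasurableSet A := measurableSet_lt measurable_const S.meas_ρ
  have hPA : 0 < (S.P A).toReal :=
    ENNReal.toReal_pos (measure_lt_ne_zero_of_essSup_eq_top hbar c) (measure_ne_top _ _)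
  set IA := ∫ ω in A, S.ρ ω ∂S.P
  have hcIA : c * (S.P A).toReal ≤ IA :=
    setIntegral_ge_of_const_le_real hA (measure_ne_top _ _) (fun _ hω => le_of_lt hω)
      S.ρ_int.integrableOn
  have hIA : 0 < IA := (mul_pos (one_pos.trans_le hc1) hPA).trans_le hcIA
  set b := z / IA
  have hb : 0 ≤ b := div_nonneg hz hIA.le
  have hbIA : b * IA = z := div_mul_cancel₀ z hIA.ne'
  -- Markov: `b P(A) ≤ b E[ρ 1_A] / c = z / c ≤ 1`
  have hbPA : b * (S.P A).toReal ≤ 1 := by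
    refine le_of_mul_le_mul_right ?_ (one_pos.trans_le hc1)
    nlinarith [(le_max_right 1 z).trans (le_max_right k _)]
  refine ⟨A, hA, disjoint_left.2 fun ω (hωB : S.ρ ω ≤ k) (hωA : c < S.ρ ω) =>
      (le_max_left k _).not_gt (hωA.trans_le hωB), b, hb, hbIA, ?_⟩
  exact S.um_concave.mul_apply_le_apply_one S.um_mono.monotoneOn S.um_zero ENNReal.toReal_nonneg
    (toReal_measure_mem_Icc A).2 hb hbPA

theorem exists_feasP_lt_Vval (hup_unbdd : ∀ M : ℝ, ∃ x : ℝ, 0 ≤ x ∧ M < S.up x)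
    (hbar : rhoBar S = ⊤) (hTm : ∀ x ∈ Icc (0 : ℝ) 1, S.Tm x = x) (M : ℝ) :
    ∃ X : Ω → ℝ, FeasP S X ∧ (M : EReal) < Vval S X := by
  have := S.isProb
  obtain ⟨k, hIB⟩ := exists_pos_setIntegral_setOf_le S.meas_ρ S.ρ_int S.Eρ_pos
  set B := {ω | S.ρ ω ≤ k}
  set IB := ∫ ω in B, S.ρ ω ∂S.P
  have hB : MeasurableSet B := measurableSet_le S.meas_ρ measurable_const
  have hPB : 0 < (S.P B).toReal :=
    ENNReal.toReal_pos (fun h => hIB.ne' (setIntegral_measure_zero _ h)) (measure_ne_top _ _)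
  set t := S.Tp (S.P B).toReal
  have ht : 0 < t := S.Tp_zero ▸ S.Tp_mono (by simp) (toReal_measure_mem_Icc B) hPB
  obtain ⟨x, hx0, hx⟩ := hup_unbdd ((M + S.um 1) / t)
  set a := max x (max (S.x0 / IB) 0)
  have ha0 : 0 ≤ a := le_max_of_le_right (le_max_right _ _)
  have haIB : S.x0 ≤ a * IB := (div_le_iff₀ hIB).1 (le_max_of_le_right (le_max_left _ _))
  have hgain : M + S.um 1 < t * S.up a :=
    (div_lt_iff₀' ht).1 (hx.trans_le (S.up_mono.monotoneOn hx0 ha0 (le_max_left _ _)))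
  obtain ⟨A, hA, hBA, b, hb, hbudget, hloss⟩ := S.exists_short_position hbar k (sub_nonneg.2 haIB)
  refine ⟨_, S.feasP_indicator_sub_indicator hA hB ha0 hb (by linarith), ?_⟩
  rw [S.Vval_indicator_sub_indicator hBA ha0 hb, hTm _ (toReal_measure_mem_Icc A),
    EReal.coe_lt_coe_iff]
  linarith

end BSetup

/-- Theorem 3.2: if `u₊` is unbounded, `esssup ρ = +∞`, and
`T₋` is the identity (no distortion on losses), then Problem (P) is ill-posed. -/
theorem illposed_of_no_loss_distortion (S : BSetup Ω)
    (hup_unbdd : ∀ M : ℝ, ∃ x : ℝ, 0 ≤ x ∧ M < S.up x)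
    (hbar : rhoBar S = ⊤)
    (hTm : ∀ x ∈ Set.Icc (0:ℝ) 1, S.Tm x = x) :
    IllposedP S := by
  refine sSup_eq_top.2 fun w hw => ?_
  obtain ⟨M, hwM, -⟩ := EReal.lt_iff_exists_real_btwn.1 hw
  obtain ⟨X, hX, hMX⟩ := S.exists_feasP_lt_Vval hup_unbdd hbar hTm M
  exact ⟨Vval S X, ⟨X, hX, rfl⟩, hwM.trans hMX⟩

end
end

section
/- Problem (P) is ill-posed (its supremum is +∞) if and only if Problem (S) is ill-posed (its supremum is +∞). -/
open MeasureTheory Set Filter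
open scoped ENNReal symmDiff

noncomputable section

variable {Ω : Type*} [MeasurableSpace Ω]

/-!
A feasible `X` of (P) splits as `X = X⁺ - X⁻`; on `A = {X > 0}` with `x₊ = E[ρX⁺]`, the parts
`X⁺` and `X⁻` are feasible for the positive and negative part problems, so
`V(X) ≤ v₊(A, x₊) - v₋(A, x₊)`.
Conversely, feasible solutions `X₊`, `X₋` of the two part problems with parameters `(A, x₊)`
have disjoint supports, so `X₊ - X₋` is feasible for (P) with value `V₊(X₊) - V₋(X₋)`.
Hence (P) and (S) have the same supremum.
-/

def choquetIntegral (P : Measure Ω) (T u : ℝ → ℝ) (Y : Ω → ℝ) : ℝ≥0∞ :=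
  ∫⁻ y in Ioi (0 : ℝ), ENNReal.ofReal (T (P {ω | y < u (Y ω)}).toReal)

lemma choquetIntegral_congr {P : Measure Ω} (T u : ℝ → ℝ) {Y Y' : Ω → ℝ} (h : Y =ᵐ[P] Y') :
    choquetIntegral P T u Y = choquetIntegral P T u Y' := by
  refine lintegral_congr fun y => ?_
  have : {ω | y < u (Y ω)} =ᵐ[P] {ω | y < u (Y' ω)} :=
    eventuallyEq_set.2 (h.mono fun ω hω => by simp [hω])
  rw [measure_congr this]

lemma choquetIntegral_zero (P : Measure Ω) {T u : ℝ → ℝ} (hT : T 0 = 0) (hu : u 0 = 0) :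
    choquetIntegral P T u 0 = 0 := by
  refine (setLIntegral_congr_fun measurableSet_Ioi fun y (hy : 0 < y) => ?_).trans lintegral_zero
  simp [hu, hy.not_gt, hT]

namespace EReal

lemma sSup_sub_sInf_le {A B : Set EReal} {c : EReal} (h : ∀ x ∈ A, ∀ y ∈ B, x - y ≤ c) :
    sSup A - sInf B ≤ c := by
  refine add_le_of_forall_lt fun a ha b hb => ?_
  obtain ⟨x, hxA, hax⟩ := lt_sSup_iff.1 ha
  obtain ⟨y, hyB, hyb⟩ := sInf_lt_iff.1 (lt_neg_comm.1 hb)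
  exact (add_le_add hax.le (EReal.le_neg.1 hyb.le)).trans (h x hxA y hyB)

end EReal

section

variable {S : BSetup Ω} {A : Set Ω} {xp : ℝ} {X : Ω → ℝ}

lemma Vpl_congr {Y Y' : Ω → ℝ} (h : Y =ᵐ[S.P] Y') : Vpl S Y = Vpl S Y' :=
  choquetIntegral_congr S.Tp S.up h

lemma Vmn_congr {Y Y' : Ω → ℝ} (h : Y =ᵐ[S.P] Y') : Vmn S Y = Vmn S Y' :=
  choquetIntegral_congr S.Tm S.um h

lemma Vpl_eq_zero (h : X =ᵐ[S.P] 0) : Vpl S X = 0 :=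
  (Vpl_congr h).trans (choquetIntegral_zero S.P S.Tp_zero S.up_zero)

lemma Vmn_eq_zero (h : X =ᵐ[S.P] 0) : Vmn S X = 0 :=
  (Vmn_congr h).trans (choquetIntegral_zero S.P S.Tm_zero S.um_zero)

lemma integral_rho_mul_nonneg (hX : ∀ᵐ ω ∂S.P, 0 ≤ X ω) : 0 ≤ ∫ ω, S.ρ ω * X ω ∂S.P :=
  integral_nonneg_of_ae <| by filter_upwards [S.ρ_pos, hX] with ω hρ hXω using mul_nonneg hρ.le hXω

lemma integral_rho_mul_eq_zero (hX : X =ᵐ[S.P] 0) : ∫ ω, S.ρ ω * X ω ∂S.P = 0 :=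
  integral_eq_zero_of_ae <| by filter_upwards [hX] with ω hω using by simp [hω]

lemma integrable_rho_mul_of_ae_le {b : ℝ} (hXm : AEMeasurable X S.P) (hX : ∀ᵐ ω ∂S.P, 0 ≤ X ω)
    (hb : ∀ᵐ ω ∂S.P, X ω ≤ b) : Integrable (fun ω => S.ρ ω * X ω) S.P := by
  refine (S.ρ_int.mul_const b).mono' (S.meas_ρ.aemeasurable.mul hXm).aestronglyMeasurable ?_
  filter_upwards [S.ρ_pos, hX, hb] with ω hρ hXω hbω
  rw [norm_mul, Real.norm_of_nonneg hρ.le, Real.norm_of_nonneg hXω]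
  exact mul_le_mul_of_nonneg_left hbω hρ.le

lemma FeasPos.ae_eq_zero (hX : FeasPos S A xp X) (hA : S.P A = 0) : X =ᵐ[S.P] 0 := by
  filter_upwards [measure_eq_zero_iff_ae_notMem.1 hA, hX.2.2.2.2] with ω hωA hω using hω hωA

lemma FeasNeg.ae_eq_zero (hX : FeasNeg S A xp X) (hAm : MeasurableSet A) (hA : S.P A = 1) :
    X =ᵐ[S.P] 0 := by
  have : ∀ᵐ ω ∂S.P, ω ∈ A := by
    have := S.isProb
    rwa [ae_iff, ← compl_def, prob_compl_eq_zero_iff hAm]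
  filter_upwards [this, hX.2.2.2.2.2] with ω hωA hω using hω hωA

lemma FeasPos.eq_zero (hX : FeasPos S A xp X) (hA : S.P A = 0) : xp = 0 :=
  hX.2.2.2.1 ▸ integral_rho_mul_eq_zero (hX.ae_eq_zero hA)

lemma FeasNeg.eq_x0 (hX : FeasNeg S A xp X) (hAm : MeasurableSet A) (hA : S.P A = 1) :
    xp = S.x0 :=
  sub_eq_zero.1 (hX.2.2.2.2.1 ▸ integral_rho_mul_eq_zero (hX.ae_eq_zero hAm hA))

lemma FeasS.of_feasPos_feasNeg {Xp Xm : Ω → ℝ} (hAm : MeasurableSet A) (hp : FeasPos S A xp Xp)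
    (hn : FeasNeg S A xp Xm) : FeasS S A xp := by
  have hxp : 0 ≤ xp := hp.2.2.2.1 ▸ integral_rho_mul_nonneg hp.2.1
  have hxm : 0 ≤ xp - S.x0 := hn.2.2.2.2.1 ▸ integral_rho_mul_nonneg hn.2.1
  exact ⟨hAm, max_le (by linarith) hxp, hp.eq_zero, hn.eq_x0 hAm⟩

lemma le_vPos (hX : FeasPos S A xp X) : (Vpl S X : EReal) ≤ vPos S A xp := by
  unfold vPos
  split_ifs with hA hx
  · simp [Vpl_eq_zero (hX.ae_eq_zero hA)]
  · exact absurd (hX.eq_zero hA) hx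
  · exact le_sSup ⟨X, hX, rfl⟩

lemma vNeg_le (hX : FeasNeg S A xp X) (hAm : MeasurableSet A) :
    vNeg S A xp ≤ (Vmn S X : EReal) := by
  unfold vNeg
  split_ifs with hA hx
  · exact EReal.coe_ennreal_nonneg _
  · exact absurd (hX.eq_x0 hAm hA) hx
  · exact sInf_le ⟨X, hX, rfl⟩

lemma vPos_le_sSup : vPos S A xp ≤ sSup {v | ∃ X, FeasPos S A xp X ∧ v = (Vpl S X : EReal)} := by
  unfold vPos
  split_ifs with hA hx
  · subst hx
    refine le_sSup ⟨0, ⟨aemeasurable_const, ae_of_all _ fun _ => le_rfl, ?_, ?_,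
      ae_of_all _ fun _ _ => rfl⟩, ?_⟩ <;> simp [Vpl_eq_zero]
  · exact bot_le
  · exact le_rfl

lemma sInf_le_vNeg : sInf {v | ∃ X, FeasNeg S A xp X ∧ v = (Vmn S X : EReal)} ≤ vNeg S A xp := by
  unfold vNeg
  split_ifs with hA hx
  · subst hx
    refine sInf_le ⟨0, ⟨aemeasurable_const, ae_of_all _ fun _ => le_rfl,
      ⟨0, ae_of_all _ fun _ => le_rfl⟩, ?_, ?_, ae_of_all _ fun _ _ => rfl⟩, ?_⟩ <;>
      simp [Vmn_eq_zero]
  · exact le_top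
  · exact le_rfl

lemma Vval_sub {Xp Xm : Ω → ℝ} (hp : ∀ᵐ ω ∂S.P, 0 ≤ Xp ω) (hm : ∀ᵐ ω ∂S.P, 0 ≤ Xm ω)
    (hpm : ∀ᵐ ω ∂S.P, Xp ω = 0 ∨ Xm ω = 0) :
    Vval S (Xp - Xm) = (Vpl S Xp : EReal) - (Vmn S Xm : EReal) := by
  unfold Vval
  rw [Vpl_congr (Y' := Xp), Vmn_congr (Y' := Xm)]
  · filter_upwards [hp, hm, hpm] with ω h₁ h₂ h₃
    rcases h₃ with h | h <;> simp [h, h₁, h₂]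
  · filter_upwards [hp, hm, hpm] with ω h₁ h₂ h₃
    rcases h₃ with h | h <;> simp [h, h₁, h₂]

lemma FeasPos.ae_eq_zero_or {Xp Xm : Ω → ℝ} (hp : FeasPos S A xp Xp) (hn : FeasNeg S A xp Xm) :
    ∀ᵐ ω ∂S.P, Xp ω = 0 ∨ Xm ω = 0 := by
  filter_upwards [hp.2.2.2.2, hn.2.2.2.2.2] with ω h₁ h₂
  by_cases hω : ω ∈ A
  exacts [Or.inr (h₂ hω), Or.inl (h₁ hω)]

lemma FeasPos.feasP_sub {Xp Xm : Ω → ℝ} (hp : FeasPos S A xp Xp) (hn : FeasNeg S A xp Xm) :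
    FeasP S (Xp - Xm) := by
  obtain ⟨hpm, hp0, hpi, hpx, -⟩ := hp
  obtain ⟨hnm, -, ⟨b, hb⟩, hni, hnx, -⟩ := hn
  refine ⟨hpm.sub hnm, ⟨-b, ?_⟩, ?_, ?_⟩
  · filter_upwards [hp0, hb] with ω h₁ h₂
    simp only [Pi.sub_apply]
    linarith
  · simp only [Pi.sub_apply, mul_sub]
    exact hpi.sub hni
  · simp only [Pi.sub_apply, mul_sub]
    rw [integral_sub hpi hni, hpx, hnx]
    ring

theorem supS_le_supP : supS S ≤ supP S := by
  refine sSup_le ?_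
  rintro _ ⟨A, xp, -, rfl⟩
  calc objS S A xp
      ≤ sSup {v | ∃ X, FeasPos S A xp X ∧ v = (Vpl S X : EReal)} -
          sInf {v | ∃ X, FeasNeg S A xp X ∧ v = (Vmn S X : EReal)} :=
        EReal.sub_le_sub vPos_le_sSup sInf_le_vNeg
    _ ≤ supP S := by
        refine EReal.sSup_sub_sInf_le ?_
        rintro _ ⟨Xp, hp, rfl⟩ _ ⟨Xm, hn, rfl⟩
        exact Vval_sub hp.2.1 hn.2.1 (hp.ae_eq_zero_or hn) ▸ le_sSup ⟨_, hp.feasP_sub hn, rfl⟩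

lemma FeasP.exists_feasS (hX : FeasP S X) : ∃ A xp, FeasS S A xp ∧
    FeasPos S A xp (fun ω => max (X ω) 0) ∧ FeasNeg S A xp (fun ω => max (-X ω) 0) := by
  obtain ⟨hXm, ⟨b, hb⟩, hXi, hXx⟩ := hX
  have hnb : ∀ᵐ ω ∂S.P, max (-X ω) 0 ≤ max (-b) 0 := by
    filter_upwards [hb] with ω hω
    exact max_le_max (neg_le_neg hω) le_rfl
  have hnm : AEMeasurable (fun ω => max (-X ω) 0) S.P := hXm.neg.max aemeasurable_const
  have hni := integrable_rho_mul_of_ae_le hnm (ae_of_all _ fun _ => le_max_right _ _) hnb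
  have hsplit : (fun ω => S.ρ ω * max (X ω) 0) = fun ω => S.ρ ω * X ω + S.ρ ω * max (-X ω) 0 := by
    funext ω
    rcases le_total (X ω) 0 with h | h <;> simp [h]
  have hpi : Integrable (fun ω => S.ρ ω * max (X ω) 0) S.P := hsplit ▸ hXi.add hni
  set A := {ω | 0 < hXm.mk X ω}
  have hAm : MeasurableSet A := measurableSet_lt measurable_const hXm.measurable_mk
  have hp : FeasPos S A (∫ ω, S.ρ ω * max (X ω) 0 ∂S.P) (fun ω => max (X ω) 0) := by
    refine ⟨hXm.max aemeasurable_const, ae_of_all _ fun _ => le_max_right _ _, hpi, rfl, ?_⟩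
    filter_upwards [hXm.ae_eq_mk] with ω hω hωA
    simpa [hω, A] using hωA
  have hn : FeasNeg S A (∫ ω, S.ρ ω * max (X ω) 0 ∂S.P) (fun ω => max (-X ω) 0) := by
    refine ⟨hnm, ae_of_all _ fun _ => le_max_right _ _, ⟨_, hnb⟩, hni, ?_, ?_⟩
    · rw [hsplit, integral_add hXi hni, hXx]
      ring
    · filter_upwards [hXm.ae_eq_mk] with ω hω hωA
      simpa [hω, A] using hωA.le
  exact ⟨A, _, FeasS.of_feasPos_feasNeg hAm hp hn, hp, hn⟩

theorem supP_le_supS : supP S ≤ supS S := by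
  refine sSup_le ?_
  rintro _ ⟨X, hX, rfl⟩
  obtain ⟨A, xp, hS, hp, hn⟩ := hX.exists_feasS
  exact le_sSup_of_le ⟨A, xp, hS, rfl⟩ (EReal.sub_le_sub (le_vPos hp) (vNeg_le hn hS.1))

theorem supP_eq_supS : supP S = supS S :=
  supP_le_supS.antisymm supS_le_supP

end

theorem illposedP_iff_illposedS_general (S : BSetup Ω) :
    IllposedP S ↔ supS S = ⊤ := by
  rw [IllposedP, supP_eq_supS]

/-- Proposition 5.1: Problem (P) is ill-posed if and only if
Problem (S) is ill-posed. -/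
theorem illposedP_iff_illposedS (S : BSetup Ω) (hfin : FinCond S) :
    IllposedP S ↔ supS S = ⊤ :=
  illposedP_iff_illposedS_general S

end
end

section
/- If x₊ > 0 and the positive part problem with parameters ({ρ ≤ c}, x₊) admits an optimal solution, then v₊(c̄, x₊) > v₊(c, x₊) for every c̄ > c satisfying P{c < ρ ≤ c̄} > 0. -/
open MeasureTheory Set Filter
open scoped ENNReal symmDiff

noncomputable section

variable {Ω : Type*} [MeasurableSpace Ω]

/-!
Let `X` be optimal for `({ρ ≤ c}, x₊)`, let `B = {c < ρ ≤ c̄}` and `k = x₊ / E[ρ 1_B]`. For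
`0 < d < k` the competitor `(1 - d/k) X + d 1_B` is feasible for `({ρ ≤ c̄}, x₊)`. By concavity
of `u₊`, scaling `X` by `1 - d/k` loses at most `(d/k) V₊(X)`, which is finite. Since `X`
vanishes on `B`, adding the bump raises `P{u₊(·) > y}` by `P(B)` for every `y < u₊(d)`, hence
gains at least `δ u₊(d)`, where `δ = min_p (T₊(p + P(B)) - T₊(p)) > 0`. As `u₊'(0+) = ∞`,
`u₊(d)/d → ∞` and the gain wins for small `d`.
-/

attribute [instance] BSetup.isProb

theorem eventually_mul_le_of_tendsto_deriv_atTop {f f' : ℝ → ℝ}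
    (hf : ∀ x ∈ Ioi (0 : ℝ), HasDerivAt f (f' x) x) (hf' : Tendsto f' (nhdsWithin 0 (Ioi 0)) atTop)
    (hf0 : ∀ x ∈ Ioi (0 : ℝ), 0 ≤ f x) (C : ℝ) :
    ∀ᶠ t in nhdsWithin 0 (Ioi 0), C * t ≤ f t := by
  obtain ⟨ε, hε, hge⟩ := (mem_nhdsGT_iff_exists_Ioo_subset' one_pos).1
    (hf'.eventually (eventually_ge_atTop (2 * C)))
  filter_upwards [Ioo_mem_nhdsGT hε] with t ht
  have hderiv : ∀ x ∈ interior (Ioo 0 ε), HasDerivAt f (f' x) x := fun x hx =>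
    hf x (interior_subset hx).1
  have hslope := (convex_Ioo 0 ε).mul_sub_le_image_sub_of_le_deriv
    (fun x hx => (hf x hx.1).continuousAt.continuousWithinAt)
    (fun x hx => (hderiv x hx).differentiableAt.differentiableWithinAt)
    (fun x hx => by rw [(hderiv x hx).deriv]; exact hge (interior_subset hx))
    (t / 2) ⟨by linarith [ht.1], by linarith [ht.1, ht.2]⟩ t ht (by linarith [ht.1])
  linarith [hf0 (t / 2) (half_pos ht.1)]

theorem StrictMonoOn.exists_pos_add_le_add {f : ℝ → ℝ} {a b q : ℝ}
    (hmono : StrictMonoOn f (Icc a b)) (hcont : ContinuousOn f (Icc a b)) (hq : 0 < q)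
    (hqb : a + q ≤ b) :
    ∃ δ > 0, ∀ p ∈ Icc a (b - q), f p + δ ≤ f (p + q) := by
  have hshift : MapsTo (· + q) (Icc a (b - q)) (Icc a b) := fun p hp =>
    ⟨by linarith [hp.1], by linarith [hp.2]⟩
  have hincl : Icc a (b - q) ⊆ Icc a b := Icc_subset_Icc_right (by linarith)
  obtain ⟨p₀, hp₀, hmin⟩ := isCompact_Icc.exists_isMinOn (nonempty_Icc.2 (by linarith))
    ((hcont.comp (continuous_add_const q).continuousOn hshift).sub (hcont.mono hincl))
  refine ⟨f (p₀ + q) - f p₀, sub_pos.2 (hmono (hincl hp₀) (hshift hp₀) (by linarith)),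
    fun p hp => ?_⟩
  have := isMinOn_iff.1 hmin p hp
  simp only [Pi.sub_apply, Function.comp_apply] at this
  linarith

theorem setLIntegral_Ioi_zero_comp_mul_left {F : ℝ → ℝ≥0∞} (hF : Measurable F) {a : ℝ}
    (ha : 0 < a) :
    ∫⁻ y in Ioi 0, F (a * y) = ENNReal.ofReal a⁻¹ * ∫⁻ y in Ioi 0, F y := by
  have hcomp : (Ioi 0).indicator (fun y => F (a * y)) = fun y => (Ioi 0).indicator F (a * y) := by
    ext y
    simp only [indicator, mem_Ioi, mul_pos_iff_of_pos_left ha]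
  rw [← lintegral_indicator measurableSet_Ioi, ← lintegral_indicator measurableSet_Ioi, hcomp,
    ← lintegral_map (hF.indicator measurableSet_Ioi) (measurable_const_mul a),
    Real.map_volume_mul_left ha.ne', lintegral_smul_measure, abs_of_pos (inv_pos.2 ha),
    smul_eq_mul]

namespace BSetup

variable (S : BSetup Ω)

theorem Tp_le_Tp {a b : ℝ} (ha : 0 ≤ a) (hab : a ≤ b) (hb : b ≤ 1) : S.Tp a ≤ S.Tp b :=
  S.Tp_mono.monotoneOn ⟨ha, hab.trans hb⟩ ⟨ha.trans hab, hb⟩ hab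

theorem Tp_nonneg {a : ℝ} (ha : 0 ≤ a) (ha1 : a ≤ 1) : 0 ≤ S.Tp a :=
  S.Tp_zero ▸ S.Tp_le_Tp le_rfl ha ha1

theorem up_le_up {x y : ℝ} (hx : 0 ≤ x) (hxy : x ≤ y) : S.up x ≤ S.up y :=
  S.up_mono.monotoneOn hx (hx.trans hxy) hxy

theorem up_nonneg {x : ℝ} (hx : 0 ≤ x) : 0 ≤ S.up x :=
  S.up_zero ▸ S.up_le_up le_rfl hx

theorem mul_up_le_up_mul {l x : ℝ} (hl0 : 0 ≤ l) (hl1 : l ≤ 1) (hx : 0 ≤ x) :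
    l * S.up x ≤ S.up (l * x) := by
  simpa [S.up_zero] using S.up_concave.2 hx self_mem_Ici hl0 (sub_nonneg.2 hl1) (by ring)

theorem eventually_mul_le_up (C : ℝ) : ∀ᶠ t in nhdsWithin 0 (Ioi 0), C * t ≤ S.up t :=
  eventually_mul_le_of_tendsto_deriv_atTop S.up_deriv S.up'_zero
    (fun _ hx => S.up_nonneg (le_of_lt hx)) C

def distortedTail (Y : Ω → ℝ) (y : ℝ) : ℝ≥0∞ :=
  ENNReal.ofReal (S.Tp (S.P {ω | y < S.up (Y ω)}).toReal)

variable {Y Z : Ω → ℝ}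

theorem Vpl_eq_setLIntegral_distortedTail (Y : Ω → ℝ) :
    Vpl S Y = ∫⁻ y in Ioi 0, S.distortedTail Y y :=
  rfl

theorem distortedTail_le_of_ae_subset {y z : ℝ}
    (h : {ω | y < S.up (Y ω)} ≤ᵐ[S.P] {ω | z < S.up (Z ω)}) :
    S.distortedTail Y y ≤ S.distortedTail Z z :=
  ENNReal.ofReal_le_ofReal <| S.Tp_le_Tp ENNReal.toReal_nonneg
    (ENNReal.toReal_mono (measure_ne_top _ _) (measure_mono_ae h)) measureReal_le_one

theorem antitone_distortedTail (Y : Ω → ℝ) : Antitone (S.distortedTail Y) :=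
  fun _ _ hy => S.distortedTail_le_of_ae_subset <|
    Eventually.of_forall fun _ (h : _ < _) => hy.trans_lt h

theorem measurable_distortedTail (Y : Ω → ℝ) : Measurable (S.distortedTail Y) :=
  (S.antitone_distortedTail Y).measurable

theorem setOf_lt_up_ae_le (hY : 0 ≤ᵐ[S.P] Y) (hYZ : Y ≤ᵐ[S.P] Z) (y : ℝ) :
    {ω | y < S.up (Y ω)} ≤ᵐ[S.P] {ω | y < S.up (Z ω)} := by
  filter_upwards [hY, hYZ] with ω h0 hle (h : _ < _)
  exact h.trans_le (S.up_le_up h0 hle)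

theorem distortedTail_le_of_ae_le (hY : 0 ≤ᵐ[S.P] Y) (hYZ : Y ≤ᵐ[S.P] Z) (y : ℝ) :
    S.distortedTail Y y ≤ S.distortedTail Z y :=
  S.distortedTail_le_of_ae_subset (S.setOf_lt_up_ae_le hY hYZ y)

theorem ofReal_mul_Vpl_le_Vpl_mul (hY : 0 ≤ᵐ[S.P] Y) {l : ℝ} (hl0 : 0 < l) (hl1 : l ≤ 1) :
    ENNReal.ofReal l * Vpl S Y ≤ Vpl S (fun ω => l * Y ω) := by
  have hscale : ∀ y, S.distortedTail Y (l⁻¹ * y) ≤ S.distortedTail (fun ω => l * Y ω) y :=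
    fun y => S.distortedTail_le_of_ae_subset <| by
      filter_upwards [hY] with ω h0 (h : _ < _)
      have : y < l * S.up (Y ω) := by rwa [inv_mul_lt_iff₀ hl0] at h
      exact this.trans_le (S.mul_up_le_up_mul hl0.le hl1 h0)
  calc ENNReal.ofReal l * Vpl S Y = ∫⁻ y in Ioi 0, S.distortedTail Y (l⁻¹ * y) := by
        rw [setLIntegral_Ioi_zero_comp_mul_left (S.measurable_distortedTail Y) (inv_pos.2 hl0),
          inv_inv, Vpl_eq_setLIntegral_distortedTail]
    _ ≤ Vpl S (fun ω => l * Y ω) := lintegral_mono fun y => hscale y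

variable {B : Set Ω} {d δ : ℝ}

theorem distortedTail_add_ofReal_le (hY : 0 ≤ᵐ[S.P] Y) (hYB : ∀ᵐ ω ∂S.P, ω ∈ B → Y ω = 0)
    (hB : MeasurableSet B) (hd : 0 ≤ d) (hδ : 0 ≤ δ)
    (hT : ∀ p ∈ Icc 0 (1 - (S.P B).toReal), S.Tp p + δ ≤ S.Tp (p + (S.P B).toReal))
    {y : ℝ} (hy : 0 < y) (hyd : y < S.up d) :
    S.distortedTail Y y + ENNReal.ofReal δ ≤ S.distortedTail (Y + B.indicator fun _ => d) y := by
  set U := {ω | y < S.up (Y ω)}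
  set W := {ω | y < S.up ((Y + B.indicator fun _ => d) ω)}
  have hUW : U ≤ᵐ[S.P] W := S.setOf_lt_up_ae_le hY
    (Eventually.of_forall fun ω => le_add_of_nonneg_right (indicator_nonneg (fun _ _ => hd) ω)) y
  have hBW : B ≤ᵐ[S.P] W := by
    filter_upwards [hY] with ω h0 (hω : ω ∈ B)
    show y < S.up (Y ω + B.indicator _ ω)
    rw [indicator_of_mem hω]
    exact hyd.trans_le (S.up_le_up hd (le_add_of_nonneg_left h0))
  have hUB : AEDisjoint S.P U B := by
    rw [AEDisjoint, measure_eq_zero_iff_ae_notMem]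
    filter_upwards [hYB] with ω h ⟨(hU : y < S.up (Y ω)), hωB⟩
    rw [h hωB, S.up_zero] at hU
    exact hy.not_gt hU
  have hsum : (S.P U).toReal + (S.P B).toReal ≤ (S.P W).toReal := by
    rw [← ENNReal.toReal_add (measure_ne_top _ _) (measure_ne_top _ _),
      ← measure_union₀ hB.nullMeasurableSet hUB]
    exact ENNReal.toReal_mono (measure_ne_top _ _)
      ((measure_mono_ae (hUW.union hBW)).trans_eq (by rw [union_self]))
  have hW1 : (S.P W).toReal ≤ 1 := measureReal_le_one
  calc S.distortedTail Y y + ENNReal.ofReal δ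
      = ENNReal.ofReal (S.Tp (S.P U).toReal + δ) :=
        (ENNReal.ofReal_add (S.Tp_nonneg ENNReal.toReal_nonneg measureReal_le_one) hδ).symm
    _ ≤ S.distortedTail (Y + B.indicator fun _ => d) y := ENNReal.ofReal_le_ofReal <|
        (hT _ ⟨ENNReal.toReal_nonneg, by linarith⟩).trans
          (S.Tp_le_Tp (by positivity) hsum hW1)

theorem Vpl_add_ofReal_le_Vpl_add_indicator (hY : 0 ≤ᵐ[S.P] Y)
    (hYB : ∀ᵐ ω ∂S.P, ω ∈ B → Y ω = 0) (hB : MeasurableSet B) (hd : 0 ≤ d) (hδ : 0 ≤ δ)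
    (hT : ∀ p ∈ Icc 0 (1 - (S.P B).toReal), S.Tp p + δ ≤ S.Tp (p + (S.P B).toReal)) :
    Vpl S Y + ENNReal.ofReal (δ * S.up d) ≤ Vpl S (Y + B.indicator fun _ => d) := by
  have hbump : ∫⁻ y in Ioi 0, (Ioo 0 (S.up d)).indicator (fun _ => ENNReal.ofReal δ) y
      = ENNReal.ofReal (δ * S.up d) := by
    rw [lintegral_indicator_const measurableSet_Ioo, Measure.restrict_apply measurableSet_Ioo,
      inter_eq_left.2 Ioo_subset_Ioi_self, Real.volume_Ioo, sub_zero, ENNReal.ofReal_mul hδ]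
  rw [← hbump, Vpl_eq_setLIntegral_distortedTail,
    ← lintegral_add_right _ (measurable_const.indicator measurableSet_Ioo)]
  refine setLIntegral_mono' measurableSet_Ioi fun y hy => ?_
  by_cases hyd : y < S.up d
  · rw [indicator_of_mem (show y ∈ Ioo 0 (S.up d) from ⟨hy, hyd⟩)]
    exact S.distortedTail_add_ofReal_le hY hYB hB hd hδ hT hy hyd
  · rw [indicator_of_notMem fun h => hyd h.2, add_zero]
    exact S.distortedTail_le_of_ae_le hY
      (Eventually.of_forall fun ω => le_add_of_nonneg_right (indicator_nonneg (fun _ _ => hd) ω)) y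

theorem setIntegral_ρ_pos {B : Set Ω} (hPB : S.P B ≠ 0) :
    0 < ∫ ω in B, S.ρ ω ∂S.P := by
  rw [setIntegral_pos_iff_support_of_nonneg_ae
    (ae_restrict_of_ae (S.ρ_pos.mono fun _ h => h.le)) S.ρ_int.integrableOn]
  refine (pos_iff_ne_zero.2 hPB).trans_le (measure_mono_ae ?_)
  filter_upwards [S.ρ_pos] with ω h hB
  exact ⟨h.ne', hB⟩

end BSetup

namespace FeasPos

variable {S : BSetup Ω} {A : Set Ω} {xp : ℝ} {X : Ω → ℝ}

theorem mono {A' : Set Ω} (hX : FeasPos S A xp X) (h : A ⊆ A') : FeasPos S A' xp X :=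
  ⟨hX.1, hX.2.1, hX.2.2.1, hX.2.2.2.1, hX.2.2.2.2.mono fun _ hω hA' => hω fun hA => hA' (h hA)⟩

theorem measure_ne_zero (hX : FeasPos S A xp X) (hxp : xp ≠ 0) : S.P A ≠ 0 := by
  intro hA
  apply hxp
  rw [← hX.2.2.2.1]
  refine integral_eq_zero_of_ae ?_
  filter_upwards [measure_eq_zero_iff_ae_notMem.1 hA, hX.2.2.2.2] with ω hωA h
  simp [h hωA]

theorem le_vPos (hX : FeasPos S A xp X) (hxp : xp ≠ 0) : (Vpl S X : EReal) ≤ vPos S A xp := by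
  rw [vPos, if_neg (hX.measure_ne_zero hxp)]
  exact le_sSup ⟨X, hX, rfl⟩

theorem mul_add_indicator {B : Set Ω} {l d : ℝ} (hX : FeasPos S A xp X) (hB : MeasurableSet B)
    (hl : 0 ≤ l) (hd : 0 ≤ d) :
    FeasPos S (A ∪ B) (l * xp + d * ∫ ω in B, S.ρ ω ∂S.P)
      ((fun ω => l * X ω) + B.indicator fun _ => d) := by
  obtain ⟨hXm, hX0, hXi, hXb, hXA⟩ := hX
  have hρB : Integrable (B.indicator fun ω => d * S.ρ ω) S.P :=
    (S.ρ_int.const_mul d).indicator hB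
  have hρY : (fun ω => S.ρ ω * ((fun ω => l * X ω) + B.indicator fun _ => d) ω)
      = fun ω => l * (S.ρ ω * X ω) + B.indicator (fun ω => d * S.ρ ω) ω := by
    ext ω
    by_cases hω : ω ∈ B <;> simp [hω] <;> ring
  refine ⟨(hXm.const_mul l).add (aemeasurable_const.indicator hB), ?_, ?_, ?_, ?_⟩
  · filter_upwards [hX0] with ω h
    exact add_nonneg (mul_nonneg hl h) (indicator_nonneg (fun _ _ => hd) ω)
  · rw [hρY]
    exact (hXi.const_mul l).add hρB
  · rw [hρY, integral_add (hXi.const_mul l) hρB, integral_const_mul, integral_indicator hB,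
      integral_const_mul, hXb]
  · filter_upwards [hXA] with ω h hω
    simp [h fun hA => hω (Or.inl hA), indicator_of_notMem fun hB => hω (Or.inr hB)]

end FeasPos

theorem OptPos.vPos_eq {S : BSetup Ω} {A : Set Ω} {xp : ℝ} {X : Ω → ℝ} (hX : OptPos S A xp X)
    (hxp : xp ≠ 0) : vPos S A xp = Vpl S X := by
  refine le_antisymm ?_ (hX.1.le_vPos hxp)
  rw [vPos, if_neg (hX.1.measure_ne_zero hxp)]
  exact sSup_le fun v ⟨Y, hY, hv⟩ => hv ▸ EReal.coe_ennreal_le_coe_ennreal_iff.2 (hX.2 Y hY)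

theorem exists_feasPos_union_Vpl_lt (S : BSetup Ω) (hfin : FinCond S) {A B : Set Ω} {xp : ℝ}
    (hxp : 0 < xp) {X : Ω → ℝ} (hX : FeasPos S A xp X) (hB : MeasurableSet B)
    (hAB : Disjoint A B) (hPB : S.P B ≠ 0) :
    ∃ Y, FeasPos S (A ∪ B) xp Y ∧ Vpl S X < Vpl S Y := by
  obtain ⟨δ, hδ, hT⟩ := S.Tp_mono.exists_pos_add_le_add S.Tp_diff.continuousOn
    (ENNReal.toReal_pos hPB (measure_ne_top _ _)) (by rw [zero_add]; exact measureReal_le_one)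
  set EB := ∫ ω in B, S.ρ ω ∂S.P
  have hk : 0 < xp / EB := div_pos hxp (S.setIntegral_ρ_pos hPB)
  set k := xp / EB
  set M := (Vpl S X).toReal
  have hM : Vpl S X = ENNReal.ofReal M :=
    (ENNReal.ofReal_toReal (hfin X hX.1 hX.2.1 hX.2.2.1).ne).symm
  obtain ⟨d, hdu, hd0, hdk⟩ :=
    ((S.eventually_mul_le_up (M / (δ * k) + 1)).and (Ioo_mem_nhdsGT hk)).exists
  set l := 1 - d / k
  have hl0 : 0 < l := sub_pos.2 ((div_lt_one hk).2 hdk)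
  have hl1 : l ≤ 1 := sub_le_self _ (div_pos hd0 hk).le
  have hbudget : l * xp + d * EB = xp := by
    simp only [l, k]
    field_simp
    ring
  refine ⟨_, hbudget ▸ hX.mul_add_indicator hB hl0.le hd0.le, ?_⟩
  have hlX : 0 ≤ᵐ[S.P] fun ω => l * X ω := hX.2.1.mono fun _ h => mul_nonneg hl0.le h
  have hlXB : ∀ᵐ ω ∂S.P, ω ∈ B → l * X ω = 0 := by
    filter_upwards [hX.2.2.2.2] with ω h hωB
    rw [h (hAB.notMem_of_mem_right hωB), mul_zero]
  have hgain : M < l * M + δ * S.up d := by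
    have hbump : δ * ((M / (δ * k) + 1) * d) = d / k * M + δ * d := by
      field_simp
    linarith [mul_le_mul_of_nonneg_left hdu hδ.le, mul_pos hδ hd0,
      show l * M = M - d / k * M by ring]
  calc Vpl S X < ENNReal.ofReal (l * M + δ * S.up d) := by
        rw [hM]
        exact (ENNReal.ofReal_lt_ofReal_iff (by linarith [ENNReal.toReal_nonneg (a := Vpl S X)])).2
          hgain
    _ = ENNReal.ofReal l * Vpl S X + ENNReal.ofReal (δ * S.up d) := by
        rw [hM, ← ENNReal.ofReal_mul hl0.le,
          ← ENNReal.ofReal_add (mul_nonneg hl0.le ENNReal.toReal_nonneg)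
            (mul_nonneg hδ.le (S.up_nonneg hd0.le))]
    _ ≤ Vpl S (fun ω => l * X ω) + ENNReal.ofReal (δ * S.up d) := by
        gcongr
        exact S.ofReal_mul_Vpl_le_Vpl_mul hX.2.1 hl0 hl1
    _ ≤ Vpl S ((fun ω => l * X ω) + B.indicator fun _ => d) :=
        S.Vpl_add_ofReal_le_Vpl_add_indicator hlX hlXB hB hd0.le hδ.le hT

/-- Proposition 6.1: if `x₊ > 0` and the positive part problem
with parameters `({ρ ≤ c}, x₊)` admits an optimal solution, then
`v₊(c̄, x₊) > v₊(c, x₊)` for every `c̄ > c` with `P{c < ρ ≤ c̄} > 0`. -/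
theorem vPos_strict_increasing (S : BSetup Ω) (hfin : FinCond S)
    (c : EReal) (xp : ℝ) (hxp : 0 < xp)
    (hopt : ∃ X : Ω → ℝ, OptPos S (lev S c) xp X)
    (cb : EReal) (hcb : c < cb)
    (hP : S.P {ω | c < (S.ρ ω : EReal) ∧ (S.ρ ω : EReal) ≤ cb} ≠ 0) :
    vPos S (lev S c) xp < vPos S (lev S cb) xp := by
  obtain ⟨X, hX⟩ := hopt
  set B := {ω | c < (S.ρ ω : EReal) ∧ (S.ρ ω : EReal) ≤ cb}
  have hB : MeasurableSet B := (measurable_coe_real_ereal.comp S.meas_ρ) measurableSet_Ioc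
  have hAB : Disjoint (lev S c) B := disjoint_left.2 fun _ hA hB => hB.1.not_ge hA
  have hAB_sub : lev S c ∪ B ⊆ lev S cb :=
    union_subset (fun _ hω => le_trans hω hcb.le) fun _ hω => hω.2
  obtain ⟨Y, hY, hXY⟩ := exists_feasPos_union_Vpl_lt S hfin hxp hX.1 hB hAB hP
  rw [hX.vPos_eq hxp.ne']
  exact (EReal.coe_ennreal_lt_coe_ennreal_iff.2 hXY).trans_le ((hY.mono hAB_sub).le_vPos hxp.ne')
end
end
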